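/- Every nonzero TR function below the maximal one is a regular sequence (Theorem 3.11, converse direction): Let F be a one-dimensional tropical fan in ℝ^n with primitive generators v_1, …, v_q spanning ℝ^n and weights ω_1, …, ω_q. Fix an index i and a nonempty subset J ⊆ {1,…,q} \ {i}, and for each j ∈ J let l_j ∈ (ℤ^n)^∨ be a gallery of F on (i, j). Define M_max(x) = max(0, max_{j ∈ J} l_j(x)). Then every nonnegative TR function M that is not identically zero and satisfies M(x) ≤ M_max(x) for all x ∈ ℝ^n satisfies M(v_i) = 1, M(v_t) = 0 for all t ≠ i, and hence M·F = Σ_t ω_t M(v_t) = 1. -/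

import Mathlib

/-!
On a ray `v_t` with `t ≠ i` every gallery `l_j` takes the value `0` or `-1`, so `M_max` and
hence `M` vanish there; on `v_i` every `l_j` equals `1`, so `0 ≤ M(v_i) ≤ 1`, and `M(v_i)` is an
integer. If it were `0`, `M` would vanish on all rays, so every linear part of `M` would be `≤ 0`
on all rays; the balancing condition with positive weights forces these values to be `0`, and
since the rays span `ℝⁿ` every linear part, hence `M`, would vanish identically.
-/

/-- Integer pairing of a functional `l ∈ (ℤⁿ)^∨` with a vector `x ∈ ℤⁿ`. -/
def dotZ {n : ℕ} (l x : Fin n → ℤ) : ℤ := ∑ j, l j * x j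

/-- Value of the nonnegative tropical regular function `max(0, l₁, …, l_k)` at `x ∈ ℤⁿ`. -/
def tropEvalZ {n k : ℕ} (l : Fin k → Fin n → ℤ) (x : Fin n → ℤ) : ℤ :=
  Finset.univ.fold max 0 (fun s => dotZ (l s) x)

/-- A one-dimensional tropical fan in ℝⁿ: pairwise distinct primitive integer vectors
`v i` (the primitive generators of the rays) spanning ℝⁿ, with positive integer weights
`w i`, subject to the balancing condition `∑ i, w i • v i = 0`. -/
structure TropFan1 (n q : ℕ) where
  v : Fin q → Fin n → ℤ
  w : Fin q → ℤ
  v_inj : Function.Injective v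
  v_prim : ∀ i, Finset.univ.gcd (v i) = 1
  w_pos : ∀ i, 0 < w i
  balanced : ∑ i, w i • v i = 0
  spans : Submodule.span ℝ (Set.range fun i => fun j => ((v i j : ℝ))) = ⊤

/-- A gallery of `F` on the pair of distinct indices `(a, b)`. -/
def IsGallery {n q : ℕ} (F : TropFan1 n q) (a b : Fin q) (l : Fin n → ℤ) : Prop :=
  a ≠ b ∧ F.w a = 1 ∧ F.w b = 1 ∧ dotZ l (F.v a) = 1 ∧ dotZ l (F.v b) = -1 ∧
    ∀ j, j ≠ a → j ≠ b → dotZ l (F.v j) = 0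


/-- Value of the nonnegative tropical regular function `max(0, l_1, ..., l_k)` at a real
point `x` of ℝⁿ. -/
def tropEvalR {n k : ℕ} (l : Fin k → Fin n → ℤ) (x : Fin n → ℝ) : ℝ :=
  Finset.univ.fold max 0 (fun s => ∑ j, (l s j : ℝ) * x j)

open Finset

lemma intCast_dotZ {n : ℕ} (l v : Fin n → ℤ) :
    ∑ s, (l s : ℝ) * (v s : ℝ) = dotZ l v := by
  simp [dotZ]

lemma dotZ_le_tropEvalZ {n k : ℕ} (c : Fin k → Fin n → ℤ) (x : Fin n → ℤ) (s : Fin k) :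
    dotZ (c s) x ≤ tropEvalZ c x :=
  (le_fold_max _).2 (Or.inr ⟨s, mem_univ s, le_rfl⟩)

lemma tropEvalZ_nonneg {n k : ℕ} (c : Fin k → Fin n → ℤ) (x : Fin n → ℤ) :
    0 ≤ tropEvalZ c x :=
  (le_fold_max _).2 (Or.inl le_rfl)

lemma tropEvalR_nonneg {n k : ℕ} (c : Fin k → Fin n → ℤ) (x : Fin n → ℝ) :
    0 ≤ tropEvalR c x :=
  (le_fold_max _).2 (Or.inl le_rfl)

lemma tropEvalR_intCast {n k : ℕ} (c : Fin k → Fin n → ℤ) (x : Fin n → ℤ) :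
    tropEvalR c (fun j => (x j : ℝ)) = tropEvalZ c x := by
  simp only [tropEvalR, tropEvalZ, intCast_dotZ]
  exact_mod_cast fold_hom (op := max) (b := 0) (m := ((↑) : ℤ → ℝ)) fun _ _ => Int.cast_max

lemma tropEvalR_eq_zero_of_forall_dot_eq_zero {n k : ℕ} (c : Fin k → Fin n → ℤ)
    (x : Fin n → ℝ) (h : ∀ s, ∑ j, (c s j : ℝ) * x j = 0) : tropEvalR c x = 0 :=
  le_antisymm ((fold_max_le _).2 ⟨le_rfl, fun s _ => (h s).le⟩) (tropEvalR_nonneg c x)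

namespace TropFan1

variable {n q : ℕ} (F : TropFan1 n q)

lemma sum_w_mul_dotZ (l : Fin n → ℤ) : ∑ t, F.w t * dotZ l (F.v t) = 0 := by
  have hbal : ∀ j, ∑ t, F.w t * F.v t j = 0 := fun j => by
    simpa using congrFun F.balanced j
  calc ∑ t, F.w t * dotZ l (F.v t) = ∑ j, l j * ∑ t, F.w t * F.v t j := by
        simp only [dotZ, mul_sum]
        rw [sum_comm]
        exact sum_congr rfl fun _ _ => sum_congr rfl fun _ _ => by ring
    _ = 0 := by simp [hbal]

lemma dotZ_eq_zero_of_forall_nonpos {l : Fin n → ℤ} (h : ∀ t, dotZ l (F.v t) ≤ 0) (t : Fin q) :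
    dotZ l (F.v t) = 0 := by
  have hterm := (sum_eq_zero_iff_of_nonpos fun t _ =>
    mul_nonpos_of_nonneg_of_nonpos (F.w_pos t).le (h t)).1 (F.sum_w_mul_dotZ l) t (mem_univ t)
  exact (mul_eq_zero.1 hterm).resolve_left (F.w_pos t).ne'

lemma dot_eq_zero_of_forall_dotZ_eq_zero {l : Fin n → ℤ} (h : ∀ t, dotZ l (F.v t) = 0)
    (x : Fin n → ℝ) : ∑ j, (l j : ℝ) * x j = 0 := by
  let f : (Fin n → ℝ) →ₗ[ℝ] ℝ := Fintype.linearCombination ℝ (fun j => (l j : ℝ))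
  have hspan : Submodule.span ℝ (Set.range fun t j => (F.v t j : ℝ)) ≤ LinearMap.ker f := by
    rw [Submodule.span_le]
    rintro _ ⟨t, rfl⟩
    simp [f, Fintype.linearCombination_apply, mul_comm, intCast_dotZ, h t]
  have hx : f x = 0 := hspan (F.spans ▸ Submodule.mem_top)
  simpa [f, Fintype.linearCombination_apply, mul_comm] using hx

lemma tropEvalR_eq_zero_of_tropEvalZ_eq_zero {k : ℕ} {c : Fin k → Fin n → ℤ}
    (h : ∀ t, tropEvalZ c (F.v t) = 0) (x : Fin n → ℝ) : tropEvalR c x = 0 :=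
  tropEvalR_eq_zero_of_forall_dot_eq_zero c x fun s =>
    F.dot_eq_zero_of_forall_dotZ_eq_zero
      (F.dotZ_eq_zero_of_forall_nonpos fun t => (h t) ▸ dotZ_le_tropEvalZ c _ s) x

end TropFan1

lemma IsGallery.dotZ_nonpos {n q : ℕ} {F : TropFan1 n q} {a b : Fin q} {l : Fin n → ℤ}
    (hl : IsGallery F a b l) {t : Fin q} (ht : t ≠ a) : dotZ l (F.v t) ≤ 0 := by
  obtain ⟨-, -, -, -, hb, hzero⟩ := hl
  by_cases htb : t = b
  · rw [htb, hb]; decide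
  · rw [hzero t ht htb]

lemma max_zero_sup'_dot_le {n q : ℕ} {J : Finset (Fin q)} (hJ : J.Nonempty)
    {l : Fin q → Fin n → ℤ} {v : Fin n → ℤ} {m : ℤ} (hm : 0 ≤ m) (h : ∀ j ∈ J, dotZ (l j) v ≤ m) :
    max 0 (J.sup' hJ fun j => ∑ s, (l j s : ℝ) * (v s : ℝ)) ≤ m :=
  max_le (by exact_mod_cast hm) <| sup'_le _ _ fun j hj => by
    rw [intCast_dotZ]; exact_mod_cast h j hj

theorem below_maximal_is_regular_general {n q : ℕ} (F : TropFan1 n q) (i : Fin q)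
    (J : Finset (Fin q)) (hJ : J.Nonempty) (l : Fin q → Fin n → ℤ)
    (hgal : ∀ j ∈ J, IsGallery F i j (l j))
    (M : (Fin n → ℝ) → ℝ) (k : ℕ) (c : Fin k → Fin n → ℤ)
    (hM : ∀ x, M x = tropEvalR c x)
    (hM0 : ∃ x, M x ≠ 0)
    (hle : ∀ x, M x ≤ max 0 (J.sup' hJ fun j => ∑ s, (l j s : ℝ) * x s)) :
    M (fun j => (F.v i j : ℝ)) = 1 ∧
      (∀ t, t ≠ i → M (fun j => (F.v t j : ℝ)) = 0) ∧
      ∑ t, (F.w t : ℝ) * M (fun j => (F.v t j : ℝ)) = 1 := by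
  obtain rfl : M = tropEvalR c := funext hM
  simp only [tropEvalR_intCast]
  have hle_ray (t : Fin q) {m : ℤ} (hm : 0 ≤ m) (h : ∀ j ∈ J, dotZ (l j) (F.v t) ≤ m) :
      tropEvalZ c (F.v t) ≤ m := by
    exact_mod_cast tropEvalR_intCast c (F.v t) ▸ (hle _).trans (max_zero_sup'_dot_le hJ hm h)
  have hvanish : ∀ t, t ≠ i → tropEvalZ c (F.v t) = 0 := fun t ht =>
    le_antisymm (hle_ray t le_rfl fun j hj => (hgal j hj).dotZ_nonpos ht) (tropEvalZ_nonneg c _)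
  have hone : tropEvalZ c (F.v i) = 1 := by
    have hle_one : tropEvalZ c (F.v i) ≤ 1 :=
      hle_ray i zero_le_one fun j hj => (hgal j hj).2.2.2.1.le
    have hne : tropEvalZ c (F.v i) ≠ 0 := fun h0 => by
      obtain ⟨x, hx⟩ := hM0
      refine hx (F.tropEvalR_eq_zero_of_tropEvalZ_eq_zero (fun t => ?_) x)
      exact if ht : t = i then ht ▸ h0 else hvanish t ht
    have := tropEvalZ_nonneg c (F.v i)
    omega
  obtain ⟨j₀, hj₀⟩ := hJ
  refine ⟨by exact_mod_cast hone, fun t ht => by exact_mod_cast hvanish t ht, ?_⟩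
  rw [sum_eq_single i (fun t _ ht => by rw [hvanish t ht]; simp) (by simp), hone,
    (hgal j₀ hj₀).2.1]
  norm_num

/-- Every nonzero TR function below the maximal one is a regular sequence
(Theorem 3.11, converse direction). -/
theorem below_maximal_is_regular {n q : ℕ} (F : TropFan1 n q) (i : Fin q)
    (J : Finset (Fin q)) (hJ : J.Nonempty) (hiJ : i ∉ J) (l : Fin q → Fin n → ℤ)
    (hgal : ∀ j ∈ J, IsGallery F i j (l j))
    (M : (Fin n → ℝ) → ℝ) (k : ℕ) (c : Fin k → Fin n → ℤ)
    (hM : ∀ x, M x = tropEvalR c x)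
    (hM0 : ∃ x, M x ≠ 0)
    (hle : ∀ x, M x ≤ max 0 (J.sup' hJ fun j => ∑ s, (l j s : ℝ) * x s)) :
    M (fun j => (F.v i j : ℝ)) = 1 ∧
      (∀ t, t ≠ i → M (fun j => (F.v t j : ℝ)) = 0) ∧
      ∑ t, (F.w t : ℝ) * M (fun j => (F.v t j : ℝ)) = 1 :=
  below_maximal_is_regular_general F i J hJ l hgal M k c hM hM0 hle
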